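/- Define K(h,b) = (h + b^2)(1 - h)/R̄(b) with R̄(b) = (1/4)(1 + |b|/2)^4 for |b| ≤ 2 and R̄(b) = b^2 for |b| ≥ 2. For 1/2 < d ≤ 5√10/4, the maximum over h ∈ [0, 1/2] of inf_{b ∈ [-d,d]} K(h,b) is attained at h* = 3/8, with the infimum over b attained at b* = 1/2. -/
import Mathlib


/-- `R̄(b)`: squared minimal Chebyshev deviation for the quadratic case. -/
noncomputable def Rbar (b : ℝ) : ℝ := if |b| ≤ 2 then (1/4)*(1 + |b|/2)^4 else b^2

/-- `K(h,b) = (h + b²)(1 - h)/R̄(b)`. -/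
noncomputable def Kfun (h b : ℝ) : ℝ := (h + b^2) * (1 - h) / Rbar b

lemma Rbar_pos (b : ℝ) : 0 < Rbar b := by
  unfold Rbar
  split_ifs with h
  · positivity
  · push_neg at h
    nlinarith [abs_nonneg b, sq_abs b]

lemma Kfun_nonneg {h : ℝ} (h0 : 0 ≤ h) (h1 : h ≤ 1/2) (b : ℝ) : 0 ≤ Kfun h b := by
  unfold Kfun
  apply div_nonneg _ (Rbar_pos b).le
  nlinarith [sq_nonneg b]

lemma Rbar_half : Rbar (1/2) = 625/1024 := by
  unfold Rbar
  rw [if_pos (by rw [abs_of_nonneg (by norm_num : (0:ℝ) ≤ 1/2)]; norm_num),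
    abs_of_nonneg (by norm_num : (0:ℝ) ≤ 1/2)]
  norm_num

lemma Kfun_38_half : Kfun (3/8) (1/2) = 16/25 := by
  unfold Kfun; rw [Rbar_half]; norm_num

lemma key (d : ℝ) (hd : d ≤ 5 * Real.sqrt 10 / 4) {b : ℝ} (hb : b ∈ Set.Icc (-d) d) :
    16/25 ≤ Kfun (3/8) b := by
  have h10 : Real.sqrt 10 ^ 2 = 10 := Real.sq_sqrt (by norm_num)
  have habs : |b| ≤ 5 * Real.sqrt 10 / 4 := by
    rw [abs_le]; exact ⟨by linarith [hb.1], by linarith [hb.2]⟩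
  have hb2 : b ^ 2 ≤ 250/16 := by
    nlinarith [sq_abs b, abs_nonneg b, Real.sqrt_nonneg 10]
  unfold Kfun Rbar
  split_ifs with h
  · rw [le_div_iff₀ (by positivity)]
    have h2 : (0:ℝ) ≤ 2 - |b| := by linarith
    nlinarith [sq_abs b, abs_nonneg b, sq_nonneg (2 * |b| - 1),
      mul_nonneg (sq_nonneg (2 * |b| - 1)) h2,
      mul_nonneg (mul_nonneg (sq_nonneg (2 * |b| - 1)) h2) (abs_nonneg b)]
  · push_neg at h
    have hbpos : (0:ℝ) < b ^ 2 := by nlinarith [sq_abs b, abs_nonneg b]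
    rw [le_div_iff₀ hbpos]
    nlinarith

/-- For `1/2 < d ≤ 5√10/4`, the maximum over `h ∈ [0,1/2]` of
`inf_{b ∈ [-d,d]} K(h,b)` is attained at `h* = 3/8`, with the infimum over `b`
attained at `b* = 1/2`. -/
theorem maximin_quadratic_medium_d (d : ℝ) (hd0 : 1/2 < d)
    (hd : d ≤ 5 * Real.sqrt 10 / 4) :
    (∀ h ∈ Set.Icc (0:ℝ) (1/2),
      sInf ((fun b => Kfun h b) '' Set.Icc (-d) d) ≤
        sInf ((fun b => Kfun (3/8) b) '' Set.Icc (-d) d)) ∧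
    IsLeast ((fun b => Kfun (3/8) b) '' Set.Icc (-d) d) (Kfun (3/8) (1/2)) := by
  have hmem : (1/2 : ℝ) ∈ Set.Icc (-d) d := ⟨by linarith, by linarith⟩
  have hleast : IsLeast ((fun b => Kfun (3/8) b) '' Set.Icc (-d) d)
      (Kfun (3/8) (1/2)) := by
    constructor
    · exact ⟨1/2, hmem, rfl⟩
    · rintro y ⟨b, hb, rfl⟩
      rw [Kfun_38_half]
      exact key d hd hb
  refine ⟨?_, hleast⟩
  intro h hh
  rw [hleast.csInf_eq]
  have hbdd : BddBelow ((fun b => Kfun h b) '' Set.Icc (-d) d) :=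
    ⟨0, by rintro y ⟨b, hb, rfl⟩; exact Kfun_nonneg hh.1 hh.2 b⟩
  have h1 : sInf ((fun b => Kfun h b) '' Set.Icc (-d) d) ≤ Kfun h (1/2) :=
    csInf_le hbdd ⟨1/2, hmem, rfl⟩
  have h2 : Kfun h (1/2) ≤ Kfun (3/8) (1/2) := by
    rw [Kfun_38_half]
    unfold Kfun
    rw [Rbar_half, div_le_iff₀ (by norm_num)]
    nlinarith [sq_nonneg (h - 3/8)]
  linarith
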